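/- arXiv:1712.02043 — 3 statements merged into one kernel-verified Lean document; each statement's English description precedes it below -/
import Mathlib

section
/- Let $X \sim \mathrm{BIN}(n,p)$ with $0 \le p < 1$. Then $E[1/(n - X + 1)] \le 1/((n+1)(1-p))$. -/
/-!
Since `C(n, k) / (n - k + 1) = C(n + 1, k) / (n + 1)`, the expectation equals
`(n + 1)⁻¹ (1 - p)⁻¹ ∑_{k ≤ n} C(n + 1, k) p^k (1 - p)^(n + 1 - k)`, i.e. the binomial expansion
of `(p + (1 - p))^(n + 1)` without its top term `p^(n + 1)`. Hence
`E[1/(n - X + 1)] = (1 - p^(n + 1)) / ((n + 1)(1 - p))`.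
-/

open Finset

theorem Nat.cast_choose_div_sub_add_one {K : Type*} [Field K] [CharZero K] {n k : ℕ}
    (hk : k ≤ n) :
    (n.choose k : K) / ((n : K) - k + 1) = (n + 1).choose k / ((n : K) + 1) := by
  have hsub : ((n : K) - k + 1) = ((n + 1 - k : ℕ) : K) := by
    rw [Nat.succ_sub hk, Nat.cast_succ, Nat.cast_sub hk]
  rw [hsub, div_eq_div_iff (by norm_cast; omega) (by norm_cast)]
  exact_mod_cast Nat.choose_mul_succ_eq n k

theorem sum_range_choose_mul_pow_mul_pow_add_pow {R : Type*} [CommSemiring R] (x y : R) (n : ℕ) :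
    ∑ k ∈ range (n + 1), ((n + 1).choose k : R) * x ^ k * y ^ (n + 1 - k) + x ^ (n + 1) =
      (x + y) ^ (n + 1) := by
  rw [add_pow, sum_range_succ _ (n + 1)]
  simp only [Nat.choose_self, Nat.sub_self, pow_zero, Nat.cast_one, mul_one]
  congr 1
  exact sum_congr rfl fun k _ => by ring

theorem binomial_inv_expectation_eq (n : ℕ) {p : ℝ} (hp : p ≠ 1) :
    ∑ k ∈ range (n + 1),
        (n.choose k : ℝ) * p ^ k * (1 - p) ^ (n - k) * ((n : ℝ) - (k : ℝ) + 1)⁻¹ =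
      (1 - p ^ (n + 1)) * (((n : ℝ) + 1) * (1 - p))⁻¹ := by
  have hq : 1 - p ≠ 0 := sub_ne_zero.mpr hp.symm
  have hterm : ∀ k ∈ range (n + 1),
      (n.choose k : ℝ) * p ^ k * (1 - p) ^ (n - k) * ((n : ℝ) - (k : ℝ) + 1)⁻¹ =
        ((n + 1).choose k : ℝ) * p ^ k * (1 - p) ^ (n + 1 - k) * (((n : ℝ) + 1) * (1 - p))⁻¹ := by
    intro k hk
    have hkn : k ≤ n := Nat.lt_succ_iff.mp (mem_range.mp hk)
    calc (n.choose k : ℝ) * p ^ k * (1 - p) ^ (n - k) * ((n : ℝ) - (k : ℝ) + 1)⁻¹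
        = p ^ k * (1 - p) ^ (n - k) * ((n.choose k : ℝ) / ((n : ℝ) - k + 1)) := by ring
      _ = p ^ k * (1 - p) ^ (n - k) * (((n + 1).choose k : ℝ) / ((n : ℝ) + 1)) := by
        rw [Nat.cast_choose_div_sub_add_one hkn]
      _ = ((n + 1).choose k : ℝ) * p ^ k * (1 - p) ^ (n + 1 - k) * (((n : ℝ) + 1) * (1 - p))⁻¹ := by
        rw [Nat.succ_sub hkn, pow_succ]
        field_simp
  have hsum := sum_range_choose_mul_pow_mul_pow_add_pow p (1 - p) n
  rw [add_sub_cancel, one_pow, ← eq_sub_iff_add_eq] at hsum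
  rw [sum_congr rfl hterm, ← sum_mul, hsum]

/-- For `X ~ BIN(n,p)` with `0 ≤ p < 1`, `E[1/(n - X + 1)] ≤ 1/((n+1)(1-p))`.
The expectation is written as the explicit sum over the binomial distribution. -/
theorem binomial_inv_expectation_le (n : ℕ) (p : ℝ) (hp0 : 0 ≤ p) (hp1 : p < 1) :
    ∑ k ∈ Finset.range (n + 1),
        (n.choose k : ℝ) * p ^ k * (1 - p) ^ (n - k) * ((n : ℝ) - (k : ℝ) + 1)⁻¹ ≤
      (((n : ℝ) + 1) * (1 - p))⁻¹ := by
  rw [binomial_inv_expectation_eq n hp1.ne]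
  have hq : 0 < 1 - p := sub_pos.mpr hp1
  exact mul_le_of_le_one_left (by positivity) (by linarith [pow_nonneg hp0 (n + 1)])
end

section
/- Let $p_1, \dots, p_{m_0}$ be i.i.d. Uniform$(0,1)$ and $V(t) = \#\{i : p_i \le t\}$. For any fixed $0 \le s \le t \le 1$, $E\big[(1-t)/(m_0 - V(t) + 1) \,\big|\, V(s)\big] \le (1-s)/(m_0 - V(s) + 1)$ almost surely. -/
/-!
Record for each `ω` its profile `(A, B)`: the indices with `pᵢ ≤ s` and those with
`pᵢ ∈ (s, t]`. By independence the fibre over `(A, B)` has probability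
`s^|A| (t - s)^|B| (1 - t)^(m₀ - |A| - |B|)`, so given `V(s) = |A|` the increment
`V(t) - V(s) = |B|` is binomial. Summing over `B` reduces the claim to the binomial estimate
`∑ⱼ C(n,j) q^j r^(n-j+1) / (n-j+1) ≤ (q + r)^(n+1) / (n+1)`, the homogeneous form of
`E[1/(n - X + 1)] ≤ 1/((n+1)(1-p))` for `X ~ Bin(n, p)`; it follows from
`C(n,j) / (n-j+1) = C(n+1,j) / (n+1)` and the binomial theorem. As `σ(V(s))` consists of the
sets `{V(s) ∈ S}`, comparing integrals over these sets gives the conditional inequality.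
-/

open MeasureTheory ProbabilityTheory

/-- The empirical counting process: the number of the random points `p i` that are `≤ t`. -/
noncomputable def countLE {Ω : Type*} {k : ℕ} (p : Fin k → Ω → ℝ) (t : ℝ) (ω : Ω) : ℕ :=
  (Finset.univ.filter fun i => p i ω ≤ t).card

open Finset

theorem sum_choose_mul_pow_div_le_add_pow {q r : ℝ} (hq : 0 ≤ q) (hr : 0 ≤ r) (n : ℕ) :
    ∑ j ∈ range (n + 1), n.choose j * (q ^ j * (r ^ (n - j + 1) / ((n - j : ℕ) + 1)))
      ≤ (q + r) ^ (n + 1) / (n + 1) := by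
  have hterm : ∀ j ∈ range (n + 1),
      n.choose j * (q ^ j * (r ^ (n - j + 1) / ((n - j : ℕ) + 1)))
        = q ^ j * r ^ (n + 1 - j) * (n + 1).choose j / (n + 1) := by
    intro j hj
    have hsucc : n + 1 - j = n - j + 1 := by have := mem_range.mp hj; omega
    have hchoose : (n.choose j : ℝ) * (n + 1) = (n + 1).choose j * ((n - j : ℕ) + 1) := by
      have := Nat.choose_mul_succ_eq n j
      rw [hsucc] at this
      exact_mod_cast this
    rw [hsucc]
    field_simp
    linear_combination q ^ j * r ^ (n - j + 1) * hchoose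
  calc ∑ j ∈ range (n + 1), n.choose j * (q ^ j * (r ^ (n - j + 1) / ((n - j : ℕ) + 1)))
      = (∑ j ∈ range (n + 1), q ^ j * r ^ (n + 1 - j) * (n + 1).choose j) / (n + 1) := by
        rw [sum_div]; exact sum_congr rfl hterm
    _ ≤ (∑ j ∈ range (n + 1 + 1), q ^ j * r ^ (n + 1 - j) * (n + 1).choose j) / (n + 1) := by
        gcongr ?_ / _
        exact sum_le_sum_of_subset_of_nonneg (range_subset_range.mpr (Nat.le_succ _))
          fun _ _ _ => by positivity
    _ = (q + r) ^ (n + 1) / (n + 1) := by rw [add_pow]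

theorem sum_powerset_div_mul_pow_mul_pow_le {ι : Type*} {q r : ℝ} (hq : 0 ≤ q) (hr : 0 ≤ r)
    (C : Finset ι) :
    ∑ B ∈ C.powerset, r / ((#C - #B : ℕ) + 1) * (q ^ #B * r ^ (#C - #B))
      ≤ ∑ B ∈ C.powerset, (q + r) / (#C + 1) * (q ^ #B * r ^ (#C - #B)) := by
  rw [← mul_sum, sum_pow_mul_eq_add_pow]
  calc ∑ B ∈ C.powerset, r / ((#C - #B : ℕ) + 1) * (q ^ #B * r ^ (#C - #B))
      = ∑ j ∈ range (#C + 1),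
          (#C).choose j * (q ^ j * (r ^ (#C - j + 1) / ((#C - j : ℕ) + 1))) := by
        rw [sum_powerset_apply_card fun j => r / ((#C - j : ℕ) + 1) * (q ^ j * r ^ (#C - j))]
        exact sum_congr rfl fun j _ => by rw [nsmul_eq_mul, pow_succ]; ring
    _ ≤ (q + r) ^ (#C + 1) / (#C + 1) := sum_choose_mul_pow_div_le_add_pow hq hr #C
    _ = (q + r) / (#C + 1) * (q + r) ^ #C := by ring

theorem condExp_ae_le_of_forall_setIntegral_le {α : Type*} {m mα : MeasurableSpace α}
    {μ : Measure α} (hm : m ≤ mα) [SigmaFinite (μ.trim hm)] {f g : α → ℝ}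
    (hf : Integrable f μ) (hg : Integrable g μ) (hgm : StronglyMeasurable[m] g)
    (hfg : ∀ s, MeasurableSet[m] s → ∫ x in s, f x ∂μ ≤ ∫ x in s, g x ∂μ) :
    μ[f|m] ≤ᵐ[μ] g := by
  refine ae_le_of_ae_le_trim (hm := hm) <| ae_le_of_forall_setIntegral_le
    (integrable_condExp.trim hm stronglyMeasurable_condExp) (hg.trim hm hgm) fun s hs _ => ?_
  rw [← setIntegral_trim hm stronglyMeasurable_condExp hs, ← setIntegral_trim hm hgm hs,
    setIntegral_condExp hm hf hs]
  exact hfg s hs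

theorem setIntegral_preimage_comp_eq_sum {Ω α : Type*} [MeasurableSpace Ω] {μ : Measure Ω}
    [IsFiniteMeasure μ] {τ : Ω → α} (hτ : ∀ x, MeasurableSet (τ ⁻¹' {x})) (T : Finset α)
    (F : α → ℝ) :
    ∫ ω in τ ⁻¹' T, F (τ ω) ∂μ = ∑ x ∈ T, F x * μ.real (τ ⁻¹' {x}) := by
  have hfiber : ∀ x, ∀ ω ∈ τ ⁻¹' {x}, F (τ ω) = F x := fun x ω hω => by rw [hω]
  rw [← T.set_biUnion_preimage_singleton, integral_biUnion_finset T (fun x _ => hτ x)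
    (fun x _ y _ hxy => (Set.disjoint_singleton.mpr hxy).preimage τ)
    (fun x _ => (integrableOn_const (C := F x)).congr_fun (fun ω hω => (hfiber x ω hω).symm)
      (hτ x))]
  refine sum_congr rfl fun x _ => ?_
  rw [setIntegral_congr_fun (hτ x) (hfiber x), setIntegral_const, smul_eq_mul, mul_comm]

theorem measureReal_preimage_eq_volume_inter_Icc {Ω : Type*} [MeasurableSpace Ω]
    {μ : Measure Ω} {X : Ω → ℝ} (hX : Measurable X)
    (hunif : μ.map X = volume.restrict (Set.Icc 0 1)) {U : Set ℝ} (hU : MeasurableSet U) :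
    μ.real (X ⁻¹' U) = volume.real (U ∩ Set.Icc 0 1) := by
  rw [measureReal_def, ← Measure.map_apply hX hU, hunif, Measure.restrict_apply hU,
    measureReal_def]

section Counting

variable {Ω : Type*} {m0 : ℕ} {p : Fin m0 → Ω → ℝ}

theorem countLE_le (p : Fin m0 → Ω → ℝ) (u : ℝ) (ω : Ω) : countLE p u ω ≤ m0 :=
  (card_filter_le _ _).trans (card_univ.trans (Fintype.card_fin m0)).le

variable [MeasurableSpace Ω]

theorem measurable_countLE (hmeas : ∀ i, Measurable (p i)) (u : ℝ) :
    Measurable (countLE p u) := by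
  have hsum : countLE p u = fun ω => ∑ i, if p i ω ≤ u then 1 else 0 := by
    funext ω; exact card_filter _ _
  rw [hsum]
  exact Finset.measurable_sum _ fun i _ =>
    Measurable.ite (measurableSet_le (hmeas i) measurable_const) measurable_const measurable_const

theorem integrable_div_sub_countLE {μ : Measure Ω} [IsFiniteMeasure μ]
    (hmeas : ∀ i, Measurable (p i)) (c u : ℝ) :
    Integrable (fun ω => c / ((m0 : ℝ) - countLE p u ω + 1)) μ := by
  have hmeas_div : Measurable fun ω => c / ((m0 : ℝ) - countLE p u ω + 1) :=
    (measurable_from_top (f := fun n : ℕ => c / ((m0 : ℝ) - n + 1))).comp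
      (measurable_countLE hmeas u)
  refine .of_bound hmeas_div.aestronglyMeasurable |c| (ae_of_all _ fun ω => ?_)
  have hden : (1 : ℝ) ≤ m0 - countLE p u ω + 1 := by
    have : (countLE p u ω : ℝ) ≤ m0 := by exact_mod_cast countLE_le p u ω
    linarith
  rw [norm_div, Real.norm_eq_abs, Real.norm_of_nonneg (by linarith)]
  exact div_le_self (abs_nonneg c) hden

end Counting

section Profile

variable {Ω : Type*} {m0 : ℕ} (p : Fin m0 → Ω → ℝ) (s t : ℝ)

noncomputable def profile (ω : Ω) : Finset (Fin m0) × Finset (Fin m0) :=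
  (univ.filter fun i => p i ω ≤ s, univ.filter fun i => p i ω ∈ Set.Ioc s t)

/-- Phrased with `↔` so that every fibre of `profile`, even over a non-disjoint pair, is the
intersection of the cells (see `profile_preimage_singleton`). -/
def profileCell (A B : Finset (Fin m0)) (i : Fin m0) : Set ℝ :=
  {x | (x ≤ s ↔ i ∈ A) ∧ (x ∈ Set.Ioc s t ↔ i ∈ B)}

variable {p s t}

theorem countLE_eq_card_profile_fst (ω : Ω) : countLE p s ω = #(profile p s t ω).1 := rfl

theorem disjoint_profile (ω : Ω) : Disjoint (profile p s t ω).1 (profile p s t ω).2 :=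
  disjoint_filter.mpr fun _ _ h h' => h'.1.not_ge h

theorem countLE_eq_card_profile_fst_add_card_snd (hst : s ≤ t) (ω : Ω) :
    countLE p t ω = #(profile p s t ω).1 + #(profile p s t ω).2 := by
  rw [← card_union_of_disjoint (disjoint_profile ω), profile, ← filter_or, countLE]
  congr 1
  ext i
  simp only [mem_filter, mem_univ, true_and, Set.mem_Ioc]
  exact ⟨fun h => (le_or_gt _ s).imp_right fun h' => ⟨h', h⟩,
    fun h => h.elim (·.trans hst) (·.2)⟩

theorem profile_preimage_singleton (A B : Finset (Fin m0)) :
    profile p s t ⁻¹' {(A, B)} = ⋂ i, p i ⁻¹' profileCell s t A B i := by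
  ext ω
  simp [profile, profileCell, Finset.ext_iff, forall_and]

theorem profile_preimage_singleton_eq_empty {A B : Finset (Fin m0)} (hAB : ¬ B ⊆ Aᶜ) :
    profile p s t ⁻¹' {(A, B)} = ∅ := by
  refine Set.eq_empty_of_forall_notMem fun ω hω => hAB ?_
  rw [Set.mem_preimage, Set.mem_singleton_iff] at hω
  rw [le_compl_iff_disjoint_left]
  simpa [hω] using disjoint_profile (p := p) (s := s) (t := t) ω

theorem profileCell_of_mem_left {A B : Finset (Fin m0)} {i : Fin m0} (hA : i ∈ A) (hB : i ∉ B) :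
    profileCell s t A B i = Set.Iic s := by
  ext x; simp +contextual [profileCell, hA, hB]

theorem profileCell_of_mem_right {A B : Finset (Fin m0)} {i : Fin m0} (hA : i ∉ A) (hB : i ∈ B) :
    profileCell s t A B i = Set.Ioc s t := by
  ext x; simp +contextual [profileCell, hA, hB]

theorem profileCell_of_notMem (hst : s ≤ t) {A B : Finset (Fin m0)} {i : Fin m0} (hA : i ∉ A)
    (hB : i ∉ B) : profileCell s t A B i = Set.Ioi t := by
  ext x
  simp only [profileCell, hA, hB, iff_false, not_le, Set.mem_Ioc, not_and, Set.mem_ofPred_eq,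
    Set.mem_Ioi]
  exact ⟨fun h => h.2 h.1, fun h => ⟨hst.trans_lt h, fun _ => h⟩⟩

theorem measurableSet_profileCell (A B : Finset (Fin m0)) (i : Fin m0) :
    MeasurableSet (profileCell s t A B i) :=
  (measurableSet_Iic.iff (.const _)).inter (measurableSet_Ioc.iff (.const _))

theorem measurableSet_profile_preimage_singleton [MeasurableSpace Ω]
    (hmeas : ∀ i, Measurable (p i)) (x : Finset (Fin m0) × Finset (Fin m0)) :
    MeasurableSet (profile p s t ⁻¹' {x}) := by
  rw [profile_preimage_singleton]
  exact .iInter fun i => hmeas i (measurableSet_profileCell _ _ i)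

variable [MeasurableSpace Ω] {μ : Measure Ω}

theorem measureReal_profile_preimage_singleton (hmeas : ∀ i, Measurable (p i))
    (hindep : iIndepFun p μ) (hunif : ∀ i, μ.map (p i) = volume.restrict (Set.Icc 0 1))
    (hs : 0 ≤ s) (hst : s ≤ t) (ht : t ≤ 1) {A B : Finset (Fin m0)} (hB : B ⊆ Aᶜ) :
    μ.real (profile p s t ⁻¹' {(A, B)}) = s ^ #A * ((t - s) ^ #B * (1 - t) ^ (#Aᶜ - #B)) := by
  set v := fun i => μ.real (p i ⁻¹' profileCell s t A B i)
  have hv : ∀ i {U}, profileCell s t A B i = U → v i = volume.real (U ∩ Set.Icc 0 1) :=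
    fun i U hU => hU ▸ measureReal_preimage_eq_volume_inter_Icc (hmeas i) (hunif i)
      (measurableSet_profileCell A B i)
  have hvA : ∀ i ∈ A, v i = s := fun i hi => by
    rw [hv i (profileCell_of_mem_left hi fun hiB => mem_compl.mp (hB hiB) hi)]
    rw [show Set.Iic s ∩ Set.Icc 0 1 = Set.Icc 0 s by
      ext x; simp only [Set.mem_inter_iff, Set.mem_Iic, Set.mem_Icc]; grind]
    exact (Real.volume_real_Icc_of_le hs).trans (sub_zero s)
  have hvB : ∀ i ∈ B, v i = t - s := fun i hi => by
    rw [hv i (profileCell_of_mem_right (mem_compl.mp (hB hi)) hi)]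
    rw [show Set.Ioc s t ∩ Set.Icc 0 1 = Set.Ioc s t by
      ext x; simp only [Set.mem_inter_iff, Set.mem_Ioc, Set.mem_Icc]; grind]
    exact Real.volume_real_Ioc_of_le hst
  have hvrest : ∀ i ∈ Aᶜ \ B, v i = 1 - t := fun i hi => by
    obtain ⟨hiA, hiB⟩ := mem_sdiff.mp hi
    rw [hv i (profileCell_of_notMem hst (mem_compl.mp hiA) hiB)]
    rw [show Set.Ioi t ∩ Set.Icc 0 1 = Set.Ioc t 1 by
      ext x; simp only [Set.mem_inter_iff, Set.mem_Ioi, Set.mem_Ioc, Set.mem_Icc]; grind]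
    exact Real.volume_real_Ioc_of_le ht
  have hprod : μ.real (profile p s t ⁻¹' {(A, B)}) = ∏ i, v i := by
    have hindep_cells := hindep.measure_inter_preimage_eq_mul univ
      fun i _ => measurableSet_profileCell (s := s) (t := t) A B i
    simp only [mem_univ, Set.iInter_true] at hindep_cells
    rw [profile_preimage_singleton, measureReal_def, hindep_cells, ENNReal.toReal_prod]
    rfl
  rw [hprod, ← prod_mul_prod_compl A, ← prod_sdiff hB, prod_eq_pow_card hvA,
    prod_eq_pow_card hvB, prod_eq_pow_card hvrest, card_sdiff_of_subset hB]
  ring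

theorem sum_mul_measureReal_profile_preimage_le (hmeas : ∀ i, Measurable (p i))
    (hindep : iIndepFun p μ) (hunif : ∀ i, μ.map (p i) = volume.restrict (Set.Icc 0 1))
    (hs : 0 ≤ s) (hst : s ≤ t) (ht : t ≤ 1) (A : Finset (Fin m0)) :
    ∑ B, (1 - t) / ((m0 : ℝ) - ((#A + #B : ℕ) : ℝ) + 1) * μ.real (profile p s t ⁻¹' {(A, B)})
      ≤ ∑ B, (1 - s) / ((m0 : ℝ) - #A + 1) * μ.real (profile p s t ⁻¹' {(A, B)}) := by
  have hvanish : ∀ (c : Finset (Fin m0) → ℝ), ∀ B ∈ univ, B ∉ Aᶜ.powerset →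
      c B * μ.real (profile p s t ⁻¹' {(A, B)}) = 0 := fun c B _ hB => by
    rw [profile_preimage_singleton_eq_empty (mt mem_powerset.mpr hB), measureReal_empty, mul_zero]
  rw [← sum_subset (subset_univ _)
      (hvanish fun B => (1 - t) / ((m0 : ℝ) - ((#A + #B : ℕ) : ℝ) + 1)),
    ← sum_subset (subset_univ _) (hvanish fun _ => (1 - s) / ((m0 : ℝ) - #A + 1))]
  have hweight : ∀ B ∈ Aᶜ.powerset,
      μ.real (profile p s t ⁻¹' {(A, B)}) = s ^ #A * ((t - s) ^ #B * (1 - t) ^ (#Aᶜ - #B)) :=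
    fun _ hB => measureReal_profile_preimage_singleton hmeas hindep hunif hs hst ht
      (mem_powerset.mp hB)
  have hm0 : (m0 : ℝ) = #A + #Aᶜ := by
    rw [← Nat.cast_add, card_add_card_compl, Fintype.card_fin]
  have hlhs : ∑ B ∈ Aᶜ.powerset,
        (1 - t) / ((m0 : ℝ) - ((#A + #B : ℕ) : ℝ) + 1) * μ.real (profile p s t ⁻¹' {(A, B)})
      = s ^ #A * ∑ B ∈ Aᶜ.powerset,
        (1 - t) / ((#Aᶜ - #B : ℕ) + 1) * ((t - s) ^ #B * (1 - t) ^ (#Aᶜ - #B)) := by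
    rw [mul_sum]
    refine sum_congr rfl fun B hB => ?_
    rw [hweight B hB, hm0, Nat.cast_sub (card_le_card (mem_powerset.mp hB)), Nat.cast_add]
    ring
  have hrhs : ∑ B ∈ Aᶜ.powerset,
        (1 - s) / ((m0 : ℝ) - #A + 1) * μ.real (profile p s t ⁻¹' {(A, B)})
      = s ^ #A * ∑ B ∈ Aᶜ.powerset,
        (1 - s) / (#Aᶜ + 1) * ((t - s) ^ #B * (1 - t) ^ (#Aᶜ - #B)) := by
    rw [mul_sum]
    refine sum_congr rfl fun B hB => ?_
    rw [hweight B hB, hm0]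
    ring
  rw [hlhs, hrhs]
  gcongr s ^ #A * ?_
  simpa using sum_powerset_div_mul_pow_mul_pow_le (sub_nonneg.mpr hst) (sub_nonneg.mpr ht) Aᶜ

variable [IsFiniteMeasure μ]

theorem setIntegral_preimage_countLE_le (hmeas : ∀ i, Measurable (p i))
    (hindep : iIndepFun p μ) (hunif : ∀ i, μ.map (p i) = volume.restrict (Set.Icc 0 1))
    (hs : 0 ≤ s) (hst : s ≤ t) (ht : t ≤ 1) (S : Set ℕ) :
    ∫ ω in countLE p s ⁻¹' S, (1 - t) / ((m0 : ℝ) - countLE p t ω + 1) ∂μ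
      ≤ ∫ ω in countLE p s ⁻¹' S, (1 - s) / ((m0 : ℝ) - countLE p s ω + 1) ∂μ := by
  classical
  let T := (univ.filter fun A : Finset (Fin m0) => #A ∈ S) ×ˢ
    (univ : Finset (Finset (Fin m0)))
  have hT : countLE p s ⁻¹' S = profile p s t ⁻¹' T := by
    ext ω; simp [T, countLE_eq_card_profile_fst (t := t)]
  have hfiber := measurableSet_profile_preimage_singleton hmeas (s := s) (t := t)
  rw [hT]
  calc ∫ ω in profile p s t ⁻¹' T, (1 - t) / ((m0 : ℝ) - countLE p t ω + 1) ∂μ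
      = ∑ x ∈ T, (1 - t) / ((m0 : ℝ) - ((#x.1 + #x.2 : ℕ) : ℝ) + 1) *
          μ.real (profile p s t ⁻¹' {x}) := by
        simp_rw [countLE_eq_card_profile_fst_add_card_snd hst]
        exact setIntegral_preimage_comp_eq_sum hfiber T
          fun x => (1 - t) / ((m0 : ℝ) - ((#x.1 + #x.2 : ℕ) : ℝ) + 1)
    _ ≤ ∑ x ∈ T, (1 - s) / ((m0 : ℝ) - #x.1 + 1) * μ.real (profile p s t ⁻¹' {x}) := by
        rw [sum_product, sum_product]
        exact sum_le_sum fun A _ =>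
          sum_mul_measureReal_profile_preimage_le hmeas hindep hunif hs hst ht A
    _ = ∫ ω in profile p s t ⁻¹' T, (1 - s) / ((m0 : ℝ) - countLE p s ω + 1) ∂μ :=
        (setIntegral_preimage_comp_eq_sum (μ := μ) hfiber T
          fun x => (1 - s) / ((m0 : ℝ) - #x.1 + 1)).symm

end Profile

/-- One-step supermartingale inequality: for i.i.d. `Uniform(0,1)` variables and
`V(t) = #{i : pᵢ ≤ t}`, for fixed `0 ≤ s ≤ t ≤ 1`,
`E[(1-t)/(m₀ - V(t) + 1) | V(s)] ≤ (1-s)/(m₀ - V(s) + 1)` almost surely. -/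
theorem cond_exp_one_step_supermartingale {Ω : Type*} [mΩ : MeasurableSpace Ω]
    (μ : Measure Ω) [IsProbabilityMeasure μ]
    (m0 : ℕ) (p : Fin m0 → Ω → ℝ)
    (hmeas : ∀ i, Measurable (p i))
    (hindep : iIndepFun p μ)
    (hunif : ∀ i, Measure.map (p i) μ = volume.restrict (Set.Icc 0 1))
    (s t : ℝ) (hs : 0 ≤ s) (hst : s ≤ t) (ht : t ≤ 1) :
    ∀ᵐ ω ∂μ,
      (μ[(fun ω' => (1 - t) / ((m0 : ℝ) - (countLE p t ω' : ℝ) + 1)) |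
          MeasurableSpace.comap (countLE p s) ⊤]) ω ≤
        (1 - s) / ((m0 : ℝ) - (countLE p s ω : ℝ) + 1) := by
  refine condExp_ae_le_of_forall_setIntegral_le (measurable_countLE hmeas s).comap_le
    (integrable_div_sub_countLE hmeas _ _) (integrable_div_sub_countLE hmeas _ _)
    ((measurable_from_top (f := fun n : ℕ => (1 - s) / ((m0 : ℝ) - n + 1))).comp
      (comap_measurable _)).stronglyMeasurable ?_
  rintro _ ⟨S, -, rfl⟩
  exact setIntegral_preimage_countLE_le hmeas hindep hunif hs hst ht S
end

section
/- Let $p_1, \dots, p_{m_0}$ be i.i.d. Uniform$(0,1)$, $V(t) = \#\{i : p_i \le t\}$. For any fixed $\kappa \in (0,1)$, $E\Big[\frac{1-\kappa}{m_0 - V(\kappa) + 1} \cdot \frac{V(\kappa)}{\kappa}\Big] \le 1 - \kappa^{m_0} \le 1$. -/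
open MeasureTheory ProbabilityTheory

/-!
The events `{pᵢ ≤ κ}` are independent with probability `κ`, so `V(κ) ~ Bin(m₀, κ)`.
Since `C(m₀, v+1) (v+1) = C(m₀, v) (m₀-v)`, the weight `(1-κ)/(m₀-v+1) ⬝ v/κ` turns the binomial
probability of `v + 1` into that of `v`, so the expectation is
`∑_{v < m₀} C(m₀,v) κ^v (1-κ)^(m₀-v) = 1 - κ^m₀`.
-/

open Set unitInterval

theorem sum_choose_pow_mul_div_eq_add_pow_sub_pow (n : ℕ) {x : ℝ} (hx : x ≠ 0) (y : ℝ) :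
    ∑ k ∈ Finset.range (n + 1), (n.choose k * x ^ k * y ^ (n - k)) *
      (y / ((n : ℝ) - k + 1) * (k / x)) = (x + y) ^ n - x ^ n := by
  rw [Finset.sum_range_succ', add_pow, Finset.sum_range_succ]
  have shift : ∀ k ∈ Finset.range n,
      (n.choose (k + 1) * x ^ (k + 1) * y ^ (n - (k + 1)) : ℝ) *
        (y / ((n : ℝ) - (k + 1 : ℕ) + 1) * ((k + 1 : ℕ) / x)) =
      x ^ k * y ^ (n - k) * n.choose k := by
    intro k hk
    have hkn : k < n := Finset.mem_range.1 hk
    have hchoose : (n.choose (k + 1) : ℝ) * (k + 1 : ℕ) = n.choose k * (n - k : ℕ) := by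
      exact_mod_cast Nat.choose_succ_right_eq n k
    have hpow : y ^ (n - k) = y ^ (n - (k + 1)) * y := by
      rw [← pow_succ]; congr 1; omega
    have hden : (n : ℝ) - (k + 1 : ℕ) + 1 = (n - k : ℕ) := by
      push_cast [Nat.cast_sub hkn.le]; ring
    have hden0 : ((n - k : ℕ) : ℝ) ≠ 0 := by
      have : 0 < n - k := Nat.sub_pos_of_lt hkn
      positivity
    rw [hden, hpow]
    field_simp
    linear_combination x ^ (k + 1) * y ^ (n - (k + 1)) * y * hchoose
  rw [Finset.sum_congr rfl shift]
  simp

lemma measure_preimage_Iic_of_map_eq_uniform {Ω : Type*} [MeasurableSpace Ω] {μ : Measure Ω}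
    {X : Ω → ℝ} (hX : μ.map X = volume.restrict (Icc 0 1)) {t : ℝ} (ht : t ≤ 1) :
    μ (X ⁻¹' Iic t) = ENNReal.ofReal t := by
  have hXm : AEMeasurable X μ := .of_map_ne_zero (by simp [hX])
  have hinter : Iic t ∩ Icc 0 1 = Icc 0 t := by
    ext x; simp only [mem_inter_iff, mem_Iic, mem_Icc]; grind
  rw [← Measure.map_apply_of_aemeasurable hXm measurableSet_Iic, hX,
    Measure.restrict_apply measurableSet_Iic, hinter, Real.volume_Icc, sub_zero]

section PatternEvent

variable {Ω : Type*} {n : ℕ} {p : Fin n → Ω → ℝ} {t : ℝ}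

def patternEvent (p : Fin n → Ω → ℝ) (t : ℝ) (S : Finset (Fin n)) : Set Ω :=
  ⋂ i, p i ⁻¹' (if i ∈ S then Iic t else Ioi t)

lemma mem_patternEvent {S : Finset (Fin n)} {ω : Ω} :
    ω ∈ patternEvent p t S ↔ Finset.univ.filter (fun i => p i ω ≤ t) = S := by
  simp only [patternEvent, mem_iInter, mem_preimage, Finset.ext_iff, Finset.mem_filter,
    Finset.mem_univ, true_and]
  refine forall_congr' fun i => ?_
  by_cases hi : i ∈ S <;> simp [hi]

lemma pairwise_disjoint_patternEvent (p : Fin n → Ω → ℝ) (t : ℝ) :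
    Pairwise (Function.onFun Disjoint (patternEvent p t)) := fun _ _ hSS' =>
  disjoint_left.2 fun _ hS hS' =>
    hSS' ((mem_patternEvent.1 hS).symm.trans (mem_patternEvent.1 hS'))

lemma preimage_countLE_singleton (p : Fin n → Ω → ℝ) (t : ℝ) (k : ℕ) :
    countLE p t ⁻¹' {k} = ⋃ S ∈ Finset.powersetCard k Finset.univ, patternEvent p t S := by
  ext ω
  simp only [mem_preimage, mem_singleton_iff, mem_iUnion, mem_patternEvent,
    Finset.mem_powersetCard, Finset.subset_univ, true_and, exists_prop, exists_eq_right', countLE]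

variable [MeasurableSpace Ω] {μ : Measure Ω}

lemma nullMeasurableSet_patternEvent (hp : ∀ i, AEMeasurable (p i) μ) (S : Finset (Fin n)) :
    NullMeasurableSet (patternEvent p t S) μ :=
  .iInter fun i => (hp i).nullMeasurable (by split_ifs <;> measurability)

lemma measure_patternEvent [IsProbabilityMeasure μ] (hp : ∀ i, AEMeasurable (p i) μ)
    (hindep : iIndepFun p μ) {q : I} (hq : ∀ i, μ (p i ⁻¹' Iic t) = ENNReal.ofReal q)
    (S : Finset (Fin n)) :
    μ (patternEvent p t S) = ENNReal.ofReal (q ^ S.card * (1 - q) ^ (n - S.card)) := by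
  have hIoi : ∀ i, μ (p i ⁻¹' Ioi t) = ENNReal.ofReal (1 - q) := fun i => by
    rw [← compl_Iic, preimage_compl,
      prob_compl_eq_one_sub₀ ((hp i).nullMeasurable measurableSet_Iic), hq i,
      ENNReal.ofReal_sub _ q.2.1, ENNReal.ofReal_one]
  rw [patternEvent, hindep.meas_iInter fun i => ⟨_, (by split_ifs <;> measurability), rfl⟩]
  simp only [apply_ite μ, apply_ite (preimage (p _)), hq, hIoi]
  rw [Finset.prod_ite, Finset.prod_const, Finset.prod_const, Finset.filter_mem_eq_inter,
    Finset.univ_inter, Finset.filter_not, Finset.filter_mem_eq_inter, Finset.univ_inter,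
    Finset.card_sdiff, Finset.inter_univ, Finset.card_univ, Fintype.card_fin,
    ENNReal.ofReal_mul (pow_nonneg q.2.1 _), ENNReal.ofReal_pow q.2.1,
    ENNReal.ofReal_pow (sub_nonneg.2 q.2.2)]

lemma aemeasurable_countLE (hp : ∀ i, AEMeasurable (p i) μ) : AEMeasurable (countLE p t) μ := by
  have hsum : countLE p t = fun ω => ∑ i, (Iic t).indicator (1 : ℝ → ℕ) (p i ω) := by
    ext ω
    simp only [countLE, Finset.card_filter, indicator_apply, mem_Iic, Pi.one_apply]
  rw [hsum]
  exact Finset.aemeasurable_fun_sum _ fun i _ =>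
    (measurable_one.indicator measurableSet_Iic).comp_aemeasurable (hp i)

theorem hasLaw_countLE_binomial [IsProbabilityMeasure μ] (hp : ∀ i, AEMeasurable (p i) μ)
    (hindep : iIndepFun p μ) {q : I} (hq : ∀ i, μ (p i ⁻¹' Iic t) = ENNReal.ofReal q) :
    HasLaw (countLE p t) Bin(n, q) μ where
  aemeasurable := aemeasurable_countLE hp
  map_eq := by
    refine Measure.ext_of_singleton fun k => ?_
    rw [binomial_singleton,
      Measure.map_apply_of_aemeasurable (aemeasurable_countLE hp) (measurableSet_singleton k),
      preimage_countLE_singleton, measure_biUnion_finset₀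
        (fun S _ S' _ h => (pairwise_disjoint_patternEvent p t h).aedisjoint)
        (fun S _ => nullMeasurableSet_patternEvent hp S)]
    rw [Finset.sum_congr rfl fun S hS => by
      rw [measure_patternEvent hp hindep hq, (Finset.mem_powersetCard.1 hS).2]]
    rw [Finset.sum_const, Finset.card_powersetCard, Finset.card_univ, Fintype.card_fin,
      nsmul_eq_mul, ← ENNReal.ofReal_natCast, ← ENNReal.ofReal_mul (by positivity), mul_assoc]

end PatternEvent

theorem storey_binomial_bound_general {Ω : Type*} [MeasurableSpace Ω]
    (μ : Measure Ω) [IsProbabilityMeasure μ]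
    (m0 : ℕ) (p : Fin m0 → Ω → ℝ)
    (hindep : iIndepFun p μ)
    (hunif : ∀ i, Measure.map (p i) μ = volume.restrict (Set.Icc 0 1))
    (κ : ℝ) (hκ0 : 0 < κ) (hκ1 : κ < 1) :
    (∫ ω, ((1 - κ) / ((m0 : ℝ) - (countLE p κ ω : ℝ) + 1)) *
        ((countLE p κ ω : ℝ) / κ) ∂μ) ≤ 1 - κ ^ m0 ∧ (1 : ℝ) - κ ^ m0 ≤ 1 := by
  let q : I := ⟨κ, hκ0.le, hκ1.le⟩
  have hlaw : HasLaw (countLE p κ) Bin(m0, q) μ :=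
    hasLaw_countLE_binomial (fun i => .of_map_ne_zero (by simp [hunif i])) hindep
      fun i => measure_preimage_Iic_of_map_eq_uniform (hunif i) hκ1.le
  have hexp : ∫ ω, (1 - κ) / ((m0 : ℝ) - (countLE p κ ω : ℝ) + 1) *
      ((countLE p κ ω : ℝ) / κ) ∂μ = 1 - κ ^ m0 := by
    rw [← Function.comp_def (fun v : ℕ => (1 - κ) / ((m0 : ℝ) - v + 1) * ((v : ℝ) / κ)),
      hlaw.integral_comp .of_discrete, integral_binomial, ← Nat.range_succ_eq_Iic]
    simpa [smul_eq_mul] using sum_choose_pow_mul_div_eq_add_pow_sub_pow m0 hκ0.ne' (1 - κ)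
  exact ⟨hexp.le, sub_le_self 1 (pow_nonneg hκ0.le m0)⟩

/-- For i.i.d. `Uniform(0,1)` variables, `V(t) = #{i : pᵢ ≤ t}` and fixed `κ ∈ (0,1)`,
`E[(1-κ)/(m₀ - V(κ) + 1) ⬝ V(κ)/κ] ≤ 1 - κ^m₀ ≤ 1`. -/
theorem storey_binomial_bound {Ω : Type*} [MeasurableSpace Ω]
    (μ : Measure Ω) [IsProbabilityMeasure μ]
    (m0 : ℕ) (p : Fin m0 → Ω → ℝ)
    (hmeas : ∀ i, Measurable (p i))
    (hindep : iIndepFun p μ)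
    (hunif : ∀ i, Measure.map (p i) μ = volume.restrict (Set.Icc 0 1))
    (κ : ℝ) (hκ0 : 0 < κ) (hκ1 : κ < 1) :
    (∫ ω, ((1 - κ) / ((m0 : ℝ) - (countLE p κ ω : ℝ) + 1)) *
        ((countLE p κ ω : ℝ) / κ) ∂μ) ≤ 1 - κ ^ m0 ∧ (1 : ℝ) - κ ^ m0 ≤ 1 :=
  storey_binomial_bound_general μ m0 p hindep hunif κ hκ0 hκ1
end
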